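/- The function I_δ(θ, r) = cos(πr) + δ cos(π(2θ - r)) is invariant under the Suris standard map f_δ(θ, r) = (θ + r + V'_δ(θ), r + V'_δ(θ)), where V'_δ(θ) = -(2/π) arctan( δ sin(2πθ) / (1 + δ cos(2πθ)) ) and 0 < δ < 1; i.e., I_δ ∘ f_δ = I_δ. -/

import Mathlib

/-! Write `1 + δ e^{2πiθ} = ρ e^{ia}` with `a = arctan (δ sin 2πθ / (1 + δ cos 2πθ))`, so that
`π V'_δ(θ) = -2a`. Then `I δ (θ, r) = ρ cos (πr - a)`, and since the image `(θ', r')` satisfies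
`2θ' - r' = 2θ + r'`, also `I δ (θ', r') = ρ cos (πr' + a)`. The shift `πr' = πr - 2a` makes the
two phases agree. -/

open Real

noncomputable def Vd' (δ θ : ℝ) : ℝ :=
  -(2 / π) * arctan (δ * sin (2 * π * θ) / (1 + δ * cos (2 * π * θ)))

noncomputable def suris (δ : ℝ) (p : ℝ × ℝ) : ℝ × ℝ :=
  (p.1 + p.2 + Vd' δ p.1, p.2 + Vd' δ p.1)

noncomputable def I (δ : ℝ) (p : ℝ × ℝ) : ℝ :=
  cos (π * p.2) + δ * cos (π * (2 * p.1 - p.2))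

theorem exists_eq_mul_cos_arctan_div {x : ℝ} (hx : x ≠ 0) (y : ℝ) :
    ∃ ρ, x = ρ * cos (arctan (y / x)) ∧ y = ρ * sin (arctan (y / x)) := by
  have hcos : cos (arctan (y / x)) ≠ 0 := (cos_arctan_pos _).ne'
  refine ⟨x / cos (arctan (y / x)), (div_mul_cancel₀ x hcos).symm, ?_⟩
  rw [div_mul_eq_mul_div, mul_div_assoc, ← tan_eq_sin_div_cos, tan_arctan, mul_div_cancel₀ y hx]

theorem mul_cos_add_mul_sin_eq_sub_two_arctan {x : ℝ} (hx : x ≠ 0) (y ψ : ℝ) :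
    x * cos ψ + y * sin ψ =
      x * cos (ψ - 2 * arctan (y / x)) - y * sin (ψ - 2 * arctan (y / x)) := by
  obtain ⟨ρ, hxρ, hyρ⟩ := exists_eq_mul_cos_arctan_div hx y
  generalize arctan (y / x) = a at hxρ hyρ ⊢
  obtain ⟨b, rfl⟩ : ∃ b, ψ = b + a := ⟨ψ - a, by ring⟩
  rw [hxρ, hyρ, show b + a - 2 * a = b - a by ring]
  simp only [cos_add, sin_add, cos_sub, sin_sub]
  ring

theorem I_eq_mul_cos_add_mul_sin (δ θ r : ℝ) :
    I δ (θ, r) = (1 + δ * cos (2 * π * θ)) * cos (π * r) + δ * sin (2 * π * θ) * sin (π * r) := by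
  rw [I, show π * (2 * (θ, r).1 - (θ, r).2) = 2 * π * θ - π * r by ring, cos_sub]
  ring

theorem I_add_snd (δ θ r : ℝ) :
    I δ (θ + r, r) =
      (1 + δ * cos (2 * π * θ)) * cos (π * r) - δ * sin (2 * π * θ) * sin (π * r) := by
  rw [I, show π * (2 * (θ + r, r).1 - (θ + r, r).2) = 2 * π * θ + π * r by ring, cos_add]
  ring

theorem pi_mul_add_Vd' (δ θ r : ℝ) :
    π * (r + Vd' δ θ) =
      π * r - 2 * arctan (δ * sin (2 * π * θ) / (1 + δ * cos (2 * π * θ))) := by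
  rw [Vd']
  field_simp
  ring

theorem suris_integrable (δ : ℝ) (hδ : 0 < δ) (hδ1 : δ < 1) :
    I δ ∘ suris δ = I δ := by
  funext ⟨θ, r⟩
  have hx : 1 + δ * cos (2 * π * θ) ≠ 0 := by
    have : 0 < 1 + δ * cos (2 * π * θ) := by nlinarith [neg_one_le_cos (2 * π * θ)]
    exact this.ne'
  calc (I δ ∘ suris δ) (θ, r) = I δ (θ + (r + Vd' δ θ), r + Vd' δ θ) := by
        rw [Function.comp_apply, suris, add_assoc]
    _ = (1 + δ * cos (2 * π * θ)) * cos (π * (r + Vd' δ θ))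
          - δ * sin (2 * π * θ) * sin (π * (r + Vd' δ θ)) := I_add_snd ..
    _ = (1 + δ * cos (2 * π * θ)) * cos (π * r) + δ * sin (2 * π * θ) * sin (π * r) := by
        rw [pi_mul_add_Vd', mul_cos_add_mul_sin_eq_sub_two_arctan hx]
    _ = I δ (θ, r) := (I_eq_mul_cos_add_mul_sin ..).symm
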